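/- Let V be a vector space over ℂ and let χ : V → V be an antilinear involution with Fix(χ) ≠ {0}. Let A, B : V → V be ℂ-linear bijections, each of type I or type II. Then: (1) if A and B are of the same type, then A∘B is of type I; (2) if A and B are of different types, then both A∘B and B∘A are of type II; (3) if A is of type I then A⁻¹ is of type I, and if A is of type II then A⁻¹ is of type II. -/
import Mathlib
open Complex


/-- A `ℂ`-linear bijection `A` is of *type I* (w.r.t. the antilinear involution `χ`)
if `(u·A)(Fix χ) = Fix χ` for some fourth root of unity `u`. -/
def IsTypeI {V : Type*} [AddCommGroup V] [Module ℂ V]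
    (χ : V → V) (A : V ≃ₗ[ℂ] V) : Prop :=
  ∃ u ∈ ({1, Complex.I, -1, -Complex.I} : Set ℂ),
    (fun v : V => u • A v) '' {v : V | χ v = v} = {v : V | χ v = v}

/-- A `ℂ`-linear bijection `A` is of *type II* (w.r.t. the antilinear involution `χ`)
if `(u·A)(Fix χ) = Fix (i·χ)` for some fourth root of unity `u`. -/
def IsTypeII {V : Type*} [AddCommGroup V] [Module ℂ V]
    (χ : V → V) (A : V ≃ₗ[ℂ] V) : Prop :=
  ∃ u ∈ ({1, Complex.I, -1, -Complex.I} : Set ℂ),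
    (fun v : V => u • A v) '' {v : V | χ v = v} = {v : V | Complex.I • χ v = v}

namespace Stmt4Aux

noncomputable def ζ : ℂ := (1 + I)/(Real.sqrt 2)
noncomputable def ξ : ℂ := (1 - I)/(Real.sqrt 2)

lemma sqrt2_sq : ((Real.sqrt 2 : ℝ) : ℂ)^2 = 2 := by
  norm_cast; rw [Real.sq_sqrt]; norm_num

lemma sqrt2_ne : ((Real.sqrt 2 : ℝ) : ℂ) ≠ 0 := by
  intro h0; have := sqrt2_sq; rw [h0] at this; norm_num at this

lemma sqrt2_mul_self : ((Real.sqrt 2 : ℝ) : ℂ) * ((Real.sqrt 2 : ℝ) : ℂ) = 2 := by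
  rw [← sq]; exact sqrt2_sq

lemma ζ_sq : ζ * ζ = I := by
  rw [ζ, div_mul_div_comm, sqrt2_mul_self]
  rw [div_eq_iff (by norm_num : (2:ℂ) ≠ 0)]
  have h := Complex.I_mul_I
  ring_nf
  rw [Complex.I_sq]
  ring

lemma ζξ : ζ * ξ = 1 := by
  rw [ζ, ξ, div_mul_div_comm, sqrt2_mul_self]
  rw [div_eq_iff (by norm_num : (2:ℂ) ≠ 0)]
  ring_nf
  rw [Complex.I_sq]
  ring

lemma conj_ζ : (starRingEnd ℂ) ζ = ξ := by
  rw [ζ, ξ, map_div₀, map_add, map_one]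
  simp [Complex.conj_I, sub_eq_add_neg]

lemma conj_ξ : (starRingEnd ℂ) ξ = ζ := by
  rw [← conj_ζ, Complex.conj_conj]

lemma ξ_sq : ξ * ξ = -I := by
  have := congrArg (starRingEnd ℂ) ζ_sq
  rwa [map_mul, conj_ζ, Complex.conj_I] at this

variable {V : Type*} [AddCommGroup V] [Module ℂ V]

/-- composing images -/
lemma img_comp (A B : V ≃ₗ[ℂ] V) (u w : ℂ) (S S' S'' : Set V)
    (hA : (fun v : V => u • A v) '' S' = S'')
    (hB : (fun v : V => w • B v) '' S = S') :
    (fun v : V => (u * w) • (B.trans A) v) '' S = S'' := by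
  rw [← hA, ← hB, ← Set.image_comp]
  have : ((fun v : V => u • A v) ∘ fun v : V => w • B v)
      = fun v : V => (u * w) • (B.trans A) v := by
    funext v; simp [LinearEquiv.trans_apply, map_smul, smul_smul]
  rw [this]

/-- scaling an image -/
lemma img_scale (A : V ≃ₗ[ℂ] V) (u c : ℂ) (S S' : Set V)
    (h : (fun v : V => u • A v) '' S = S') :
    (fun v : V => (c * u) • A v) '' S = (fun v : V => c • v) '' S' := by
  rw [← h, ← Set.image_comp]
  have : ((fun v : V => c • v) ∘ fun v : V => u • A v)
      = fun v : V => (c * u) • A v := by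
    funext v; simp [mul_smul]
  rw [this]

/-- the image of a scaled set -/
lemma img_of_scaled (A : V ≃ₗ[ℂ] V) (u c : ℂ) (S : Set V) :
    (fun v : V => u • A v) '' ((fun v : V => c • v) '' S)
      = (fun v : V => c • v) '' ((fun v : V => u • A v) '' S) := by
  rw [← Set.image_comp, ← Set.image_comp]
  have : ((fun v : V => u • A v) ∘ fun v : V => c • v)
      = ((fun v : V => c • v) ∘ fun v : V => u • A v) := by
    funext v; simp [map_smul, smul_smul, mul_comm]
  rw [this]

lemma scale_scale (c d : ℂ) (S : Set V) :
    (fun v : V => c • v) '' ((fun v : V => d • v) '' S)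
      = (fun v : V => (c * d) • v) '' S := by
  rw [← Set.image_comp]
  have : ((fun v : V => c • v) ∘ fun v : V => d • v)
      = fun v : V => (c * d) • v := by
    funext v; simp [mul_smul]
  rw [this]

lemma scale_one (S : Set V) : (fun v : V => (1:ℂ) • v) '' S = S := by
  simp

lemma img_inv (A : V ≃ₗ[ℂ] V) (u : ℂ) (hu : u ≠ 0) (S S' : Set V)
    (h : (fun v : V => u • A v) '' S = S') :
    (fun v : V => u⁻¹ • A.symm v) '' S' = S := by
  subst h
  rw [← Set.image_comp]
  have : ((fun v : V => u⁻¹ • A.symm v) ∘ fun v : V => u • A v) = id := by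
    funext v
    simp [smul_smul, inv_mul_cancel₀ hu]
  rw [this, Set.image_id]

/-- Fix(iχ) = ζ • Fix(χ) -/
lemma fix_i (χ : V → V)
    (hantilinear : ∀ (c : ℂ) (v : V), χ (c • v) = (starRingEnd ℂ c) • χ v) :
    {v : V | I • χ v = v} = (fun v : V => ζ • v) '' {v : V | χ v = v} := by
  ext w
  constructor
  · intro hw
    simp only [Set.mem_setOf_eq] at hw
    refine ⟨ξ • w, ?_, ?_⟩
    · simp only [Set.mem_setOf_eq, hantilinear, conj_ξ]
      have hχw : χ w = (-I) • w := by
        have := congrArg (fun x => (-I) • x) hw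
        simpa [smul_smul] using this
      rw [hχw, smul_smul]
      have : ζ * -I = ξ := by
        have h1 : ζ * -I = ζ * (ξ * ξ) := by rw [ξ_sq]
        rw [h1, ← mul_assoc, ζξ, one_mul]
      rw [this]
    · simp only [smul_smul, ζξ, one_smul]
  · rintro ⟨v, hv, rfl⟩
    simp only [Set.mem_setOf_eq] at hv ⊢
    rw [hantilinear, conj_ζ, hv, smul_smul]
    have hIξ : I * ξ = ζ := by rw [← ζ_sq, mul_assoc, ζξ, mul_one]
    rw [hIξ]

abbrev U : Set ℂ := {1, I, -1, -I}

lemma U_ne (u : ℂ) (hu : u ∈ U) : u ≠ 0 := by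
  rcases hu with h | h | h | h <;> subst h <;> simp [I_ne_zero]

lemma U_mul {u w : ℂ} (hu : u ∈ U) (hw : w ∈ U) : u * w ∈ U := by
  rcases hu with h | h | h | h <;> rcases hw with h' | h' | h' | h' <;>
    subst h <;> subst h' <;>
    simp [U, Complex.I_mul_I]

lemma U_inv {u : ℂ} (hu : u ∈ U) : u⁻¹ ∈ U := by
  rcases hu with h | h | h | h <;> subst h <;>
    simp [U, Complex.inv_I, inv_neg, inv_one]

lemma I_mem_U : I ∈ U := by simp [U]
lemma negI_mem_U : -I ∈ U := by simp [U]

/-- a type-I map (with its unit) maps `Fix(iχ)` onto itself -/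
lemma typeI_img_T (χ : V → V)
    (hantilinear : ∀ (c : ℂ) (v : V), χ (c • v) = (starRingEnd ℂ c) • χ v)
    (A : V ≃ₗ[ℂ] V) (u : ℂ)
    (h : (fun v : V => u • A v) '' {v : V | χ v = v} = {v : V | χ v = v}) :
    (fun v : V => u • A v) '' {v : V | I • χ v = v} = {v : V | I • χ v = v} := by
  rw [fix_i χ hantilinear, img_of_scaled, h]

/-- a type-II map (with its unit) maps `Fix(iχ)` onto `I • Fix(χ)` -/
lemma typeII_img_T (χ : V → V)
    (hantilinear : ∀ (c : ℂ) (v : V), χ (c • v) = (starRingEnd ℂ c) • χ v)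
    (A : V ≃ₗ[ℂ] V) (u : ℂ)
    (h : (fun v : V => u • A v) '' {v : V | χ v = v} = {v : V | I • χ v = v}) :
    (fun v : V => u • A v) '' {v : V | I • χ v = v}
      = (fun v : V => I • v) '' {v : V | χ v = v} := by
  rw [fix_i χ hantilinear, img_of_scaled, h, fix_i χ hantilinear, scale_scale, ζ_sq]

theorem main {V : Type*} [AddCommGroup V] [Module ℂ V]
    (χ : V → V)
    (hantilinear : ∀ (c : ℂ) (v : V), χ (c • v) = (starRingEnd ℂ c) • χ v)
    (A B : V ≃ₗ[ℂ] V) :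
    (((IsTypeI χ A ∧ IsTypeI χ B) ∨ (IsTypeII χ A ∧ IsTypeII χ B)) →
        IsTypeI χ (B.trans A)) ∧
    (((IsTypeI χ A ∧ IsTypeII χ B) ∨ (IsTypeII χ A ∧ IsTypeI χ B)) →
        IsTypeII χ (B.trans A) ∧ IsTypeII χ (A.trans B)) ∧
    ((IsTypeI χ A → IsTypeI χ A.symm) ∧ (IsTypeII χ A → IsTypeII χ A.symm)) := by
  refine ⟨?_, ?_, ?_, ?_⟩
  · rintro (⟨⟨u, hu, hA⟩, ⟨w, hw, hB⟩⟩ | ⟨⟨u, hu, hA⟩, ⟨w, hw, hB⟩⟩)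
    · exact ⟨u * w, U_mul hu hw, img_comp A B u w _ _ _ hA hB⟩
    · refine ⟨-I * (u * w), U_mul negI_mem_U (U_mul hu hw), ?_⟩
      have h1 : (fun v : V => (u * w) • (B.trans A) v) '' {v : V | χ v = v}
          = (fun v : V => I • v) '' {v : V | χ v = v} :=
        img_comp A B u w _ _ _ (typeII_img_T χ hantilinear A u hA) hB
      rw [img_scale (B.trans A) (u * w) (-I) _ _ h1, scale_scale]
      have : -I * I = (1 : ℂ) := by
        rw [neg_mul, Complex.I_mul_I, neg_neg]
      rw [this, scale_one]
  · rintro (⟨⟨u, hu, hA⟩, ⟨w, hw, hB⟩⟩ | ⟨⟨u, hu, hA⟩, ⟨w, hw, hB⟩⟩)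
    · constructor
      · exact ⟨u * w, U_mul hu hw,
          img_comp A B u w _ _ _ (typeI_img_T χ hantilinear A u hA) hB⟩
      · exact ⟨w * u, U_mul hw hu, img_comp B A w u _ _ _ hB hA⟩
    · constructor
      · exact ⟨u * w, U_mul hu hw, img_comp A B u w _ _ _ hA hB⟩
      · exact ⟨w * u, U_mul hw hu,
          img_comp B A w u _ _ _ (typeI_img_T χ hantilinear B w hB) hA⟩
  · rintro ⟨u, hu, hA⟩
    exact ⟨u⁻¹, U_inv hu, img_inv A u (U_ne u hu) _ _ hA⟩
  · rintro ⟨u, hu, hA⟩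
    refine ⟨I * u⁻¹, U_mul I_mem_U (U_inv hu), ?_⟩
    have hS : {v : V | χ v = v} = (fun v : V => ξ • v) '' {v : V | I • χ v = v} := by
      rw [fix_i χ hantilinear, scale_scale]
      have : ξ * ζ = (1 : ℂ) := by rw [mul_comm]; exact ζξ
      rw [this, scale_one]
    have h2 : (fun v : V => u⁻¹ • A.symm v) '' {v : V | I • χ v = v} = {v : V | χ v = v} :=
      img_inv A u (U_ne u hu) _ _ hA
    have h3 : (fun v : V => u⁻¹ • A.symm v) '' {v : V | χ v = v}
        = (fun v : V => ξ • v) '' {v : V | χ v = v} := by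
      conv_lhs => rw [hS]
      rw [img_of_scaled, h2]
    rw [img_scale A.symm u⁻¹ I _ _ h3, scale_scale]
    have hIξ : I * ξ = ζ := by rw [← ζ_sq, mul_assoc, ζξ, mul_one]
    rw [hIξ, ← fix_i χ hantilinear]

end Stmt4Aux

theorem stmt4 {V : Type*} [AddCommGroup V] [Module ℂ V]
    (χ : V → V)
    (hadd : ∀ v w : V, χ (v + w) = χ v + χ w)
    (hantilinear : ∀ (c : ℂ) (v : V), χ (c • v) = (starRingEnd ℂ c) • χ v)
    (hinv : ∀ v : V, χ (χ v) = v)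
    (hfix : {v : V | χ v = v} ≠ {0})
    (A B : V ≃ₗ[ℂ] V)
    (hA : IsTypeI χ A ∨ IsTypeII χ A)
    (hB : IsTypeI χ B ∨ IsTypeII χ B) :
    (((IsTypeI χ A ∧ IsTypeI χ B) ∨ (IsTypeII χ A ∧ IsTypeII χ B)) →
        IsTypeI χ (B.trans A)) ∧
    (((IsTypeI χ A ∧ IsTypeII χ B) ∨ (IsTypeII χ A ∧ IsTypeI χ B)) →
        IsTypeII χ (B.trans A) ∧ IsTypeII χ (A.trans B)) ∧
    ((IsTypeI χ A → IsTypeI χ A.symm) ∧ (IsTypeII χ A → IsTypeII χ A.symm)) :=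
  Stmt4Aux.main χ hantilinear A B
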